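/- For every ε with 0 < ε² < 2√2, the function q_ε(x,y) = −(2√2/(2√2−ε²))² · √(8 − 2√2 ε²) · x / ( ((2√2−ε²)/(2√2)) x² + ((2√2−ε²)²/(4√2)) y² + 3/(2√2) ) is a smooth function on ℝ² and solves ∂ₓ⁴q − (2√2−ε²)∂ₓ²q − 3√2·((2√2−ε²)/(2√2))^{5/2}·∂ₓ((∂ₓq)²) − 2∂_y²q = 0 on all of ℝ². -/

import Mathlib

noncomputable section

namespace Stmt6

def pdx (f : ℝ → ℝ → ℝ) : ℝ → ℝ → ℝ := fun x y => deriv (fun t => f t y) x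
def pdy (f : ℝ → ℝ → ℝ) : ℝ → ℝ → ℝ := fun x y => deriv (fun t => f x t) y

/-- the rescaled lump solution q_ε -/
def qeps (ε : ℝ) : ℝ → ℝ → ℝ := fun x y =>
  -(2 * Real.sqrt 2 / (2 * Real.sqrt 2 - ε^2))^2
      * Real.sqrt (8 - 2 * Real.sqrt 2 * ε^2) * x
    / ((2 * Real.sqrt 2 - ε^2) / (2 * Real.sqrt 2) * x^2
        + (2 * Real.sqrt 2 - ε^2)^2 / (4 * Real.sqrt 2) * y^2
        + 3 / (2 * Real.sqrt 2))

lemma hasDerivAt_poly8 (c0 c1 c2 c3 c4 c5 c6 c7 c8 x : ℝ) :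
    HasDerivAt (fun t : ℝ => c0 + c1*t + c2*t^2 + c3*t^3 + c4*t^4 + c5*t^5 + c6*t^6 + c7*t^7 + c8*t^8)
      (c1 + 2*c2*x + 3*c3*x^2 + 4*c4*x^3 + 5*c5*x^4 + 6*c6*x^5 + 7*c7*x^6 + 8*c8*x^7) x := by
  have h0 : HasDerivAt (fun _ : ℝ => c0) 0 x := hasDerivAt_const x c0
  have h1 := (hasDerivAt_id x).const_mul c1
  have h2 := (hasDerivAt_pow 2 x).const_mul c2
  have h3 := (hasDerivAt_pow 3 x).const_mul c3
  have h4 := (hasDerivAt_pow 4 x).const_mul c4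
  have h5 := (hasDerivAt_pow 5 x).const_mul c5
  have h6 := (hasDerivAt_pow 6 x).const_mul c6
  have h7 := (hasDerivAt_pow 7 x).const_mul c7
  have h8 := (hasDerivAt_pow 8 x).const_mul c8
  have H := (((((((h0.add h1).add h2).add h3).add h4).add h5).add h6).add h7).add h8
  refine H.congr_deriv ?_
  push_cast
  ring

lemma hasDerivAt_polyfun (f : ℝ → ℝ) (c0 c1 c2 c3 c4 c5 c6 c7 c8 x : ℝ)
    (hf : ∀ t, f t = c0 + c1*t + c2*t^2 + c3*t^3 + c4*t^4 + c5*t^5 + c6*t^6 + c7*t^7 + c8*t^8) :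
    HasDerivAt f
      (c1 + 2*c2*x + 3*c3*x^2 + 4*c4*x^3 + 5*c5*x^4 + 6*c6*x^5 + 7*c7*x^6 + 8*c8*x^7) x := by
  have hfe : f = fun t => c0 + c1*t + c2*t^2 + c3*t^3 + c4*t^4 + c5*t^5 + c6*t^6 + c7*t^7 + c8*t^8 :=
    funext hf
  rw [hfe]
  exact hasDerivAt_poly8 c0 c1 c2 c3 c4 c5 c6 c7 c8 x

lemma hasDerivAt_ratio (num den : ℝ → ℝ) (n' d' v x : ℝ)
    (hn : HasDerivAt num n' x) (hd : HasDerivAt den d' x) (h0 : den x ≠ 0)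
    (hv : v = (n' * den x - num x * d') / (den x)^2) :
    HasDerivAt (fun t => num t / den t) v x := by
  rw [hv]; exact hn.div hd h0

lemma congr_d {f : ℝ → ℝ} {v w x : ℝ} (h : HasDerivAt f v x) (hvw : v = w) :
    HasDerivAt f w x := hvw ▸ h

set_option maxHeartbeats 2000000 in
lemma master (a b c s A K r : ℝ) (ha : 0 < a) (hb : 0 < b) (hc : 0 < c)
    (hr : r^2 = 2) (hs : s = 2*r*a) (hbb : b = r*a^2) (hc3 : 2*r*c = 3)
    (hKA : K*A = 3*r*s) (x y : ℝ) :
    pdx (pdx (pdx (pdx (fun x y => -A*x/(a*x^2+b*y^2+c))))) x y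
      - s * pdx (pdx (fun x y => -A*x/(a*x^2+b*y^2+c))) x y
      - K * pdx (fun u v => (pdx (fun x y => -A*x/(a*x^2+b*y^2+c)) u v)^2) x y
      - 2 * pdy (pdy (fun x y => -A*x/(a*x^2+b*y^2+c))) x y = 0 := by
  have hD : ∀ u v : ℝ, a*u^2+b*v^2+c ≠ 0 := fun u v => by
    have h1 := mul_nonneg ha.le (sq_nonneg u)
    have h2 := mul_nonneg hb.le (sq_nonneg v)
    linarith
  -- first x-derivative
  have H1 : ∀ u v : ℝ, HasDerivAt (fun t => -A*t/(a*t^2+b*v^2+c))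
      ((A*a*u^2 - A*(b*v^2+c))/(a*u^2+b*v^2+c)^2) u := by
    intro u v
    refine hasDerivAt_ratio (fun t => -A*t) (fun t => a*t^2+b*v^2+c) _ _ _ u
      (hasDerivAt_polyfun _ 0 (-A) 0 0 0 0 0 0 0 u (fun t => by ring))
      (hasDerivAt_polyfun _ (b*v^2+c) 0 a 0 0 0 0 0 0 u (fun t => by ring))
      (hD u v) ?_
    have h := hD u v
    field_simp
    ring
  -- second x-derivative
  have H2 : ∀ u v : ℝ, HasDerivAt (fun t => (A*a*t^2 - A*(b*v^2+c))/(a*t^2+b*v^2+c)^2)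
      (2*a*A*u*(3*(b*v^2+c) - a*u^2)/(a*u^2+b*v^2+c)^3) u := by
    intro u v
    refine hasDerivAt_ratio (fun t => A*a*t^2 - A*(b*v^2+c)) (fun t => (a*t^2+b*v^2+c)^2) _ _ _ u
      (hasDerivAt_polyfun _ (-(A*(b*v^2+c))) 0 (A*a) 0 0 0 0 0 0 u (fun t => by ring))
      (hasDerivAt_polyfun _ ((b*v^2+c)^2) 0 (2*a*(b*v^2+c)) 0 (a^2) 0 0 0 0 u (fun t => by ring))
      (pow_ne_zero 2 (hD u v)) ?_
    have h := hD u v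
    field_simp
    ring
  -- third x-derivative
  have H3 : ∀ u v : ℝ, HasDerivAt (fun t => 2*a*A*t*(3*(b*v^2+c) - a*t^2)/(a*t^2+b*v^2+c)^3)
      (6*a*A*((b*v^2+c)^2 - 6*a*(b*v^2+c)*u^2 + a^2*u^4)/(a*u^2+b*v^2+c)^4) u := by
    intro u v
    refine hasDerivAt_ratio (fun t => 2*a*A*t*(3*(b*v^2+c) - a*t^2)) (fun t => (a*t^2+b*v^2+c)^3) _ _ _ u
      (hasDerivAt_polyfun _ 0 (6*a*A*(b*v^2+c)) 0 (-(2*a^2*A)) 0 0 0 0 0 u (fun t => by ring))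
      (hasDerivAt_polyfun _ ((b*v^2+c)^3) 0 (3*a*(b*v^2+c)^2) 0 (3*a^2*(b*v^2+c)) 0 (a^3) 0 0 u
        (fun t => by ring))
      (pow_ne_zero 3 (hD u v)) ?_
    have h := hD u v
    field_simp
    ring
  -- fourth x-derivative
  have H4 : ∀ u v : ℝ, HasDerivAt
      (fun t => 6*a*A*((b*v^2+c)^2 - 6*a*(b*v^2+c)*t^2 + a^2*t^4)/(a*t^2+b*v^2+c)^4)
      (-24*a^2*A*u*(a^2*u^4 - 10*a*(b*v^2+c)*u^2 + 5*(b*v^2+c)^2)/(a*u^2+b*v^2+c)^5) u := by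
    intro u v
    refine hasDerivAt_ratio (fun t => 6*a*A*((b*v^2+c)^2 - 6*a*(b*v^2+c)*t^2 + a^2*t^4))
      (fun t => (a*t^2+b*v^2+c)^4) _ _ _ u
      (hasDerivAt_polyfun _ (6*a*A*(b*v^2+c)^2) 0 (-(36*a^2*A*(b*v^2+c))) 0 (6*a^3*A) 0 0 0 0 u
        (fun t => by ring))
      (hasDerivAt_polyfun _ ((b*v^2+c)^4) 0 (4*a*(b*v^2+c)^3) 0 (6*a^2*(b*v^2+c)^2) 0
        (4*a^3*(b*v^2+c)) 0 (a^4) u (fun t => by ring))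
      (pow_ne_zero 4 (hD u v)) ?_
    have h := hD u v
    field_simp
    ring
  -- y-derivatives
  have Hy1 : ∀ u v : ℝ, HasDerivAt (fun t => -A*u/(a*u^2+b*t^2+c))
      (2*b*A*u*v/(a*u^2+b*v^2+c)^2) v := by
    intro u v
    refine hasDerivAt_ratio (fun _ => -A*u) (fun t => a*u^2+b*t^2+c) _ _ _ v
      (hasDerivAt_polyfun _ (-A*u) 0 0 0 0 0 0 0 0 v (fun t => by ring))
      (hasDerivAt_polyfun _ (a*u^2+c) 0 b 0 0 0 0 0 0 v (fun t => by ring))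
      (hD u v) ?_
    have h := hD u v
    field_simp
    ring
  have Hy2 : ∀ u v : ℝ, HasDerivAt (fun t => 2*b*A*u*t/(a*u^2+b*t^2+c)^2)
      (2*b*A*u*(a*u^2 - 3*b*v^2 + c)/(a*u^2+b*v^2+c)^3) v := by
    intro u v
    refine hasDerivAt_ratio (fun t => 2*b*A*u*t) (fun t => (a*u^2+b*t^2+c)^2) _ _ _ v
      (hasDerivAt_polyfun _ 0 (2*b*A*u) 0 0 0 0 0 0 0 v (fun t => by ring))
      (hasDerivAt_polyfun _ ((a*u^2+c)^2) 0 (2*b*(a*u^2+c)) 0 (b^2) 0 0 0 0 v (fun t => by ring))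
      (pow_ne_zero 2 (hD u v)) ?_
    have h := hD u v
    field_simp
    ring
  -- function-level identities
  have E1 : pdx (fun x y => -A*x/(a*x^2+b*y^2+c))
      = fun u v => (A*a*u^2 - A*(b*v^2+c))/(a*u^2+b*v^2+c)^2 :=
    funext fun u => funext fun v => (H1 u v).deriv
  have E2 : pdx (fun u v => (A*a*u^2 - A*(b*v^2+c))/(a*u^2+b*v^2+c)^2)
      = fun u v => 2*a*A*u*(3*(b*v^2+c) - a*u^2)/(a*u^2+b*v^2+c)^3 :=
    funext fun u => funext fun v => (H2 u v).deriv
  have E3 : pdx (fun u v => 2*a*A*u*(3*(b*v^2+c) - a*u^2)/(a*u^2+b*v^2+c)^3)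
      = fun u v => 6*a*A*((b*v^2+c)^2 - 6*a*(b*v^2+c)*u^2 + a^2*u^4)/(a*u^2+b*v^2+c)^4 :=
    funext fun u => funext fun v => (H3 u v).deriv
  have E4 : pdx (fun u v => 6*a*A*((b*v^2+c)^2 - 6*a*(b*v^2+c)*u^2 + a^2*u^4)/(a*u^2+b*v^2+c)^4)
      = fun u v => -24*a^2*A*u*(a^2*u^4 - 10*a*(b*v^2+c)*u^2 + 5*(b*v^2+c)^2)/(a*u^2+b*v^2+c)^5 :=
    funext fun u => funext fun v => (H4 u v).deriv
  have E5 : pdx (fun u v => ((A*a*u^2 - A*(b*v^2+c))/(a*u^2+b*v^2+c)^2)^2)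
      = fun u v => -4*a*A^2*u*((b*v^2+c) - a*u^2)*(3*(b*v^2+c) - a*u^2)/(a*u^2+b*v^2+c)^5 := by
    funext u v
    refine HasDerivAt.deriv (congr_d ((H2 u v).pow 2) ?_)
    have h := hD u v
    push_cast
    field_simp
    ring
  have E6 : pdy (fun x y => -A*x/(a*x^2+b*y^2+c))
      = fun u v => 2*b*A*u*v/(a*u^2+b*v^2+c)^2 :=
    funext fun u => funext fun v => (Hy1 u v).deriv
  have E7 : pdy (fun u v => 2*b*A*u*v/(a*u^2+b*v^2+c)^2)
      = fun u v => 2*b*A*u*(a*u^2 - 3*b*v^2 + c)/(a*u^2+b*v^2+c)^3 :=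
    funext fun u => funext fun v => (Hy2 u v).deriv
  simp only [E1, E2, E3, E4, E5, E6, E7]
  have hne := hD x y
  have key : (-24*a^2*A*x*(a^2*x^4 - 10*a*(b*y^2+c)*x^2 + 5*(b*y^2+c)^2)
      - s*(2*a*A*x*(3*(b*y^2+c) - a*x^2))*(a*x^2+b*y^2+c)^2
      - K*(-4*a*A^2*x*((b*y^2+c) - a*x^2)*(3*(b*y^2+c) - a*x^2))
      - 2*(2*b*A*x*(a*x^2 - 3*b*y^2 + c))*(a*x^2+b*y^2+c)^2) = 0 := by
    rw [hs] at hKA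
    rw [hs, hbb]
    linear_combination
      (4*a*A*x*((r*a^2*y^2+c) - a*x^2)*(3*(r*a^2*y^2+c) - a*x^2))*hKA
      + (24*a^2*A*x*((r*a^2*y^2+c) - a*x^2)*(3*(r*a^2*y^2+c) - a*x^2))*hr
      + (-8*a^2*A*x*(a*x^2+r*a^2*y^2+c)^2)*hc3
  rw [show (-24*a^2*A*x*(a^2*x^4 - 10*a*(b*y^2+c)*x^2 + 5*(b*y^2+c)^2)/(a*x^2+b*y^2+c)^5
      - s*(2*a*A*x*(3*(b*y^2+c) - a*x^2)/(a*x^2+b*y^2+c)^3)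
      - K*(-4*a*A^2*x*((b*y^2+c) - a*x^2)*(3*(b*y^2+c) - a*x^2)/(a*x^2+b*y^2+c)^5)
      - 2*(2*b*A*x*(a*x^2 - 3*b*y^2 + c)/(a*x^2+b*y^2+c)^3))
      = (-24*a^2*A*x*(a^2*x^4 - 10*a*(b*y^2+c)*x^2 + 5*(b*y^2+c)^2)
      - s*(2*a*A*x*(3*(b*y^2+c) - a*x^2))*(a*x^2+b*y^2+c)^2
      - K*(-4*a*A^2*x*((b*y^2+c) - a*x^2)*(3*(b*y^2+c) - a*x^2))
      - 2*(2*b*A*x*(a*x^2 - 3*b*y^2 + c))*(a*x^2+b*y^2+c)^2)/(a*x^2+b*y^2+c)^5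
    from by field_simp]
  rw [key]
  simp

theorem qeps_solves_rescaled_KPI (ε : ℝ) (hε : 0 < ε) (hε2 : ε^2 < 2 * Real.sqrt 2) :
    ContDiff ℝ (⊤ : ℕ∞) (Function.uncurry (qeps ε)) ∧
    ∀ x y : ℝ,
      pdx (pdx (pdx (pdx (qeps ε)))) x y
        - (2 * Real.sqrt 2 - ε^2) * pdx (pdx (qeps ε)) x y
        - 3 * Real.sqrt 2 * ((2 * Real.sqrt 2 - ε^2) / (2 * Real.sqrt 2)) ^ ((5:ℝ)/2)
            * pdx (fun a b => (pdx (qeps ε) a b)^2) x y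
        - 2 * pdy (pdy (qeps ε)) x y = 0 := by
  have hs2 : (0:ℝ) < Real.sqrt 2 := Real.sqrt_pos.mpr (by norm_num)
  have h2 : Real.sqrt 2 ^ 2 = 2 := Real.sq_sqrt (by norm_num)
  have hspos : 0 < 2*Real.sqrt 2 - ε^2 := by linarith
  have ha : (0:ℝ) < (2*Real.sqrt 2 - ε^2)/(2*Real.sqrt 2) := by positivity
  have hb : (0:ℝ) < (2*Real.sqrt 2 - ε^2)^2/(4*Real.sqrt 2) := by positivity
  have hc : (0:ℝ) < 3/(2*Real.sqrt 2) := by positivity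
  have hq : qeps ε = fun x y =>
      -((2*Real.sqrt 2/(2*Real.sqrt 2 - ε^2))^2 * Real.sqrt (8 - 2*Real.sqrt 2*ε^2))*x
      /((2*Real.sqrt 2 - ε^2)/(2*Real.sqrt 2)*x^2
        + (2*Real.sqrt 2 - ε^2)^2/(4*Real.sqrt 2)*y^2 + 3/(2*Real.sqrt 2)) := by
    funext x y
    simp only [qeps]
    ring
  constructor
  · have huq : Function.uncurry (qeps ε) = fun p : ℝ×ℝ =>
        (-((2*Real.sqrt 2/(2*Real.sqrt 2 - ε^2))^2 * Real.sqrt (8 - 2*Real.sqrt 2*ε^2))*p.1)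
        /((2*Real.sqrt 2 - ε^2)/(2*Real.sqrt 2)*p.1^2
          + (2*Real.sqrt 2 - ε^2)^2/(4*Real.sqrt 2)*p.2^2 + 3/(2*Real.sqrt 2)) := by
      funext p
      show qeps ε p.1 p.2 = _
      simp only [qeps]
      ring
    rw [huq]
    refine ContDiff.div (by fun_prop) (by fun_prop) fun p => ?_
    have h1 := mul_nonneg ha.le (sq_nonneg p.1)
    have h2' := mul_nonneg hb.le (sq_nonneg p.2)
    have := hc
    positivity
  · intro x y
    have hss : (2*Real.sqrt 2 - ε^2) = 2*Real.sqrt 2*((2*Real.sqrt 2 - ε^2)/(2*Real.sqrt 2)) := by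
      field_simp
    have hbbb : (2*Real.sqrt 2 - ε^2)^2/(4*Real.sqrt 2)
        = Real.sqrt 2*((2*Real.sqrt 2 - ε^2)/(2*Real.sqrt 2))^2 := by
      field_simp
      ring_nf
    have hc3 : 2*Real.sqrt 2*(3/(2*Real.sqrt 2)) = 3 := by field_simp
    have hKA : (3*Real.sqrt 2*((2*Real.sqrt 2 - ε^2)/(2*Real.sqrt 2))^((5:ℝ)/2))
        * ((2*Real.sqrt 2/(2*Real.sqrt 2 - ε^2))^2 * Real.sqrt (8 - 2*Real.sqrt 2*ε^2))
        = 3*Real.sqrt 2*(2*Real.sqrt 2 - ε^2) := by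
      have ha0 : (0:ℝ) < (2*Real.sqrt 2 - ε^2)/(2*Real.sqrt 2) := ha
      have hrw : ((2*Real.sqrt 2 - ε^2)/(2*Real.sqrt 2) : ℝ) ^ ((5:ℝ)/2)
          = ((2*Real.sqrt 2 - ε^2)/(2*Real.sqrt 2))^2
            * Real.sqrt ((2*Real.sqrt 2 - ε^2)/(2*Real.sqrt 2)) := by
        rw [show ((5:ℝ)/2) = ((2:ℕ):ℝ) + 1/2 by norm_num, Real.rpow_add ha0, Real.rpow_natCast,
          ← Real.sqrt_eq_rpow]
      have hsq : Real.sqrt (8 - 2*Real.sqrt 2*ε^2)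
          = Real.sqrt (2*Real.sqrt 2) * Real.sqrt (2*Real.sqrt 2 - ε^2) := by
        rw [← Real.sqrt_mul (by positivity)]
        congr 1
        linear_combination (-4)*h2
      have hsqd : Real.sqrt ((2*Real.sqrt 2 - ε^2)/(2*Real.sqrt 2))
          = Real.sqrt (2*Real.sqrt 2 - ε^2)/Real.sqrt (2*Real.sqrt 2) := by
        rw [Real.sqrt_div hspos.le]
      have hms : Real.sqrt (2*Real.sqrt 2 - ε^2) * Real.sqrt (2*Real.sqrt 2 - ε^2)
          = 2*Real.sqrt 2 - ε^2 := Real.mul_self_sqrt hspos.le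
      have hne1 : (2*Real.sqrt 2 - ε^2) ≠ 0 := ne_of_gt hspos
      have hne2 : Real.sqrt (2*Real.sqrt 2) ≠ 0 := by positivity
      rw [hrw, hsq, hsqd]
      field_simp
      rw [show Real.sqrt 2*2 - ε^2 = 2*Real.sqrt 2 - ε^2 by ring, Real.sq_sqrt hspos.le,
        mul_div_assoc, div_self hne1, mul_one]
    rw [hq]
    exact master ((2*Real.sqrt 2 - ε^2)/(2*Real.sqrt 2)) ((2*Real.sqrt 2 - ε^2)^2/(4*Real.sqrt 2))
      (3/(2*Real.sqrt 2)) (2*Real.sqrt 2 - ε^2)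
      ((2*Real.sqrt 2/(2*Real.sqrt 2 - ε^2))^2 * Real.sqrt (8 - 2*Real.sqrt 2*ε^2))
      (3*Real.sqrt 2*((2*Real.sqrt 2 - ε^2)/(2*Real.sqrt 2))^((5:ℝ)/2)) (Real.sqrt 2)
      ha hb hc h2 hss hbbb hc3 hKA x y

end Stmt6
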